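/- arXiv:1503.02208 — 2 statements merged into one kernel-verified Lean document; each statement's English description precedes it below -/
import Mathlib

section
/- If L is a left ideal with quotient complexity n, then its atom A_{Q_n} (intersection of all quotients) equals L, and hence has quotient complexity exactly n. -/
/-- Left quotient of a language by a word: `w⁻¹L = {x | wx ∈ L}`. -/
def leftQuotient {α : Type*} (L : Set (List α)) (w : List α) : Set (List α) :=
  {x | w ++ x ∈ L}

/-- Atomic intersection `A_S = ⋂_{i ∈ S} K_i ∩ ⋂_{i ∉ S} K_iᶜ`. -/
def atomicInter {α : Type*} {n : ℕ} (K : Fin n → Set (List α)) (S : Set (Fin n)) :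
    Set (List α) :=
  (⋂ i ∈ S, K i) ∩ (⋂ i ∈ Sᶜ, (K i)ᶜ)

section LeftQuotient

variable {α : Type*} {n : ℕ} {L : Set (List α)} {K : Fin n → Set (List α)}

theorem leftQuotient_nil (L : Set (List α)) : leftQuotient L [] = L := rfl

theorem subset_leftQuotient_of_eq_top_mul
    (hL : (show Language α from L) = ⊤ * (show Language α from L)) (w : List α) :
    L ⊆ leftQuotient L w := by
  intro x hx
  have hwx : w ++ x ∈ (⊤ * (show Language α from L) : Language α) :=
    Language.mem_mul.mpr ⟨w, trivial, x, hx, rfl⟩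
  rwa [← hL] at hwx

theorem setOf_eq_leftQuotient_eq_range (hq : ∀ i, ∃ w, K i = leftQuotient L w)
    (hall : ∀ w, ∃ i, leftQuotient L w = K i) :
    {M : Set (List α) | ∃ w, M = leftQuotient L w} = Set.range K := by
  ext M
  constructor
  · rintro ⟨w, rfl⟩
    obtain ⟨i, hi⟩ := hall w
    exact ⟨i, hi.symm⟩
  · rintro ⟨i, rfl⟩
    exact hq i

theorem ncard_setOf_eq_leftQuotient (hinj : Function.Injective K)
    (hq : ∀ i, ∃ w, K i = leftQuotient L w) (hall : ∀ w, ∃ i, leftQuotient L w = K i) :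
    Set.ncard {M : Set (List α) | ∃ w, M = leftQuotient L w} = n := by
  rw [setOf_eq_leftQuotient_eq_range hq hall, ← Set.image_univ,
    Set.ncard_image_of_injective _ hinj, Set.ncard_univ, Nat.card_eq_fintype_card,
    Fintype.card_fin]

/-- `L` is itself the quotient by the empty word, and a left ideal lies in each of its
quotients. -/
theorem iInter_eq_of_eq_top_mul
    (hL : (show Language α from L) = ⊤ * (show Language α from L))
    (hq : ∀ i, ∃ w, K i = leftQuotient L w) (hall : ∀ w, ∃ i, leftQuotient L w = K i) :
    (⋂ i, K i) = L := by
  obtain ⟨i₀, hi₀⟩ := hall []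
  refine subset_antisymm ?_ (Set.subset_iInter fun i => ?_)
  · simpa only [← hi₀, leftQuotient_nil] using Set.iInter_subset K i₀
  · obtain ⟨w, hw⟩ := hq i
    exact hw ▸ subset_leftQuotient_of_eq_top_mul hL w

end LeftQuotient

theorem left_ideal_atom_univ_general {α : Type*} {n : ℕ}
    (L : Set (List α)) (K : Fin n → Set (List α))
    (hL : (show Language α from L) = ⊤ * (show Language α from L))
    (hinj : Function.Injective K)
    (hq : ∀ i, ∃ w, K i = leftQuotient L w)
    (hall : ∀ w, ∃ i, leftQuotient L w = K i) :
    (⋂ i, K i) = L ∧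
      Set.ncard {M : Set (List α) | ∃ w, M = leftQuotient (⋂ i, K i) w} = n := by
  have hInter : (⋂ i, K i) = L := iInter_eq_of_eq_top_mul hL hq hall
  exact ⟨hInter, hInter ▸ ncard_setOf_eq_leftQuotient hinj hq hall⟩

/-- If `L` is a left ideal with quotient complexity `n`, then the atom `A_{Q_n}`
(the intersection of all quotients) equals `L`, and hence has quotient
complexity exactly `n`. -/
theorem left_ideal_atom_univ {α : Type*} {n : ℕ} (hn : 0 < n)
    (L : Set (List α)) (K : Fin n → Set (List α))
    (hreg : Language.IsRegular L)
    (hL : (show Language α from L) = ⊤ * (show Language α from L))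
    (hinj : Function.Injective K)
    (hq : ∀ i, ∃ w, K i = leftQuotient L w)
    (hall : ∀ w, ∃ i, leftQuotient L w = K i)
    (hK0 : K ⟨0, hn⟩ = L) :
    (⋂ i, K i) = L ∧
      Set.ncard {M : Set (List α) | ∃ w, M = leftQuotient (⋂ i, K i) w} = n :=
  left_ideal_atom_univ_general L K hL hinj hq hall
end

section
/- In the atom DFA D_S, if the transition semigroup of the minimal DFA D contains, for every basis Z of an atom, a word w_Z mapping (Z, complement of Z) to a final state, then two states (X,Y) and (X',Y') with X ≠ X' are distinguishable whenever A_X and A_{X'} are both atoms. -/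
/-! A run of the atom DFA from `(A, B)` on `u` ends in a final state exactly when `u` sends
every state of `A` into `F` and every state of `B` out of `F`: the run can only fall into the
sink if some `a ∈ A` and `b ∈ B` merge, and then they agree on the rest of `u`. So a word `w_X`
accepted from `(X, Xᶜ)` sends exactly the states of `X` into `F`; it is accepted from `(X, Y)`
because `Y ⊆ Xᶜ`, and rejected from `(X', Y')` as soon as `X'` has a state outside `X`. Since
`X ≠ X'`, one of `w_X`, `w_{X'}` distinguishes the two states. -/

open Classical in
/-- The atom DFA `D_S` of a DFA `D`: states are pairs of disjoint subsets of states
of `D` (represented as `some (X, Y)`) together with a sink `⊥` (represented as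
`none`); transitions apply the step function of `D` elementwise, going to the sink
when the images intersect. -/
noncomputable def atomDFA {α σ : Type*} (D : DFA α σ) (S : Set σ) :
    DFA α (Option (Set σ × Set σ)) where
  step st a :=
    match st with
    | none => none
    | some (X, Y) =>
        if Disjoint ((fun q => D.step q a) '' X) ((fun q => D.step q a) '' Y) then
          some ((fun q => D.step q a) '' X, (fun q => D.step q a) '' Y)
        else none
  start := some (S, Sᶜ)
  accept := {st | ∃ X Y, st = some (X, Y) ∧ X ⊆ D.accept ∧ Y ∩ D.accept = ∅}

/-- The atomic intersection `A_Z` of a DFA `D`, where the language `K_q` of a state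
`q` is `{w | δ(q, w) ∈ F}`: `A_Z = ⋂_{q ∈ Z} K_q ∩ ⋂_{q ∉ Z} K_qᶜ`. -/
def atomicInterD {α σ : Type*} (D : DFA α σ) (Z : Set σ) : Set (List α) :=
  (⋂ q ∈ Z, {w : List α | D.evalFrom q w ∈ D.accept}) ∩
    (⋂ q ∈ Zᶜ, {w : List α | D.evalFrom q w ∈ D.accept}ᶜ)

section AtomDFA

variable {α σ : Type*} (D : DFA α σ) (S : Set σ)

theorem atomDFA_evalFrom_none (u : List α) : (atomDFA D S).evalFrom none u = none := by
  induction u with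
  | nil => rfl
  | cons a u ih => exact ih

theorem atomDFA_evalFrom_some_mem_accept_iff (u : List α) (A B : Set σ) :
    (atomDFA D S).evalFrom (some (A, B)) u ∈ (atomDFA D S).accept ↔
      (∀ q ∈ A, D.evalFrom q u ∈ D.accept) ∧ ∀ q ∈ B, D.evalFrom q u ∉ D.accept := by
  induction u generalizing A B with
  | nil =>
    simp [atomDFA, Set.subset_def, Set.eq_empty_iff_forall_notMem]
  | cons a u ih =>
    simp only [DFA.evalFrom_cons]
    by_cases hAB : Disjoint ((fun q => D.step q a) '' A) ((fun q => D.step q a) '' B)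
    · have hstep : (atomDFA D S).step (some (A, B)) a =
          some ((fun q => D.step q a) '' A, (fun q => D.step q a) '' B) := by
        simp [atomDFA, hAB]
      simp [hstep, ih]
    · have hstep : (atomDFA D S).step (some (A, B)) a = none := by
        simp [atomDFA, hAB]
      rw [hstep, atomDFA_evalFrom_none]
      obtain ⟨_, ⟨qA, hqA, rfl⟩, ⟨qB, hqB, hmerge⟩⟩ := Set.not_disjoint_iff.1 hAB
      simp only [atomDFA, Set.mem_ofPred_eq, reduceCtorEq, false_and, exists_const,
        false_iff, not_and, not_forall]
      intro hA
      beta_reduce at hmerge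
      exact ⟨qB, hqB, not_not.2 (hmerge ▸ hA qA hqA)⟩

variable {D S}

theorem atomDFA_not_iff_of_not_subset {u : List α} {X Y X' Y' : Set σ}
    (hu : ∀ q, D.evalFrom q u ∈ D.accept ↔ q ∈ X) (hXY : Disjoint X Y) (hX' : ¬X' ⊆ X) :
    ¬((atomDFA D S).evalFrom (some (X, Y)) u ∈ (atomDFA D S).accept ↔
        (atomDFA D S).evalFrom (some (X', Y')) u ∈ (atomDFA D S).accept) := by
  simp only [atomDFA_evalFrom_some_mem_accept_iff]
  obtain ⟨q, hqX', hqX⟩ := Set.not_subset.1 hX'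
  intro h
  have hacc : (∀ q ∈ X, D.evalFrom q u ∈ D.accept) ∧
      ∀ q ∈ Y, D.evalFrom q u ∉ D.accept :=
    ⟨fun q hq => (hu q).2 hq, fun q hq => by rw [hu]; exact Set.disjoint_right.1 hXY hq⟩
  exact hqX ((hu q).1 ((h.1 hacc).1 q hqX'))

end AtomDFA

theorem atomDFA_distinguishable_general {α σ : Type*} (D : DFA α σ)
    (hw : ∀ Z : Set σ, (atomicInterD D Z).Nonempty →
      ∃ w : List α,
        (atomDFA D Z).evalFrom (atomDFA D Z).start w ∈ (atomDFA D Z).accept)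
    (S : Set σ) (X Y X' Y' : Set σ)
    (hXY : Disjoint X Y) (hX'Y' : Disjoint X' Y') (hne : X ≠ X')
    (hX : (atomicInterD D X).Nonempty) (hX' : (atomicInterD D X').Nonempty) :
    ∃ w : List α,
      ¬((atomDFA D S).evalFrom (some (X, Y)) w ∈ (atomDFA D S).accept ↔
        (atomDFA D S).evalFrom (some (X', Y')) w ∈ (atomDFA D S).accept) := by
  have separating : ∀ Z, (atomicInterD D Z).Nonempty →
      ∃ u : List α, ∀ q, D.evalFrom q u ∈ D.accept ↔ q ∈ Z := by
    intro Z hZ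
    obtain ⟨u, hu⟩ := hw Z hZ
    obtain ⟨hin, hout⟩ := (atomDFA_evalFrom_some_mem_accept_iff D Z u Z Zᶜ).1 hu
    exact ⟨u, fun q => ⟨fun h => by_contra fun hq => hout q hq h, hin q⟩⟩
  by_cases hsub : X' ⊆ X
  · obtain ⟨u, hu⟩ := separating X' hX'
    exact ⟨u, fun h => atomDFA_not_iff_of_not_subset hu hX'Y'
      (fun h' => hne (h'.antisymm hsub)) h.symm⟩
  · obtain ⟨u, hu⟩ := separating X hX
    exact ⟨u, atomDFA_not_iff_of_not_subset hu hXY hsub⟩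

/-- Distinguishability in the atom DFA: if for every basis `Z` of an atom there is
a word mapping the initial state `(Z, Zᶜ)` of `D_Z` to a final state, then two
states `(X, Y)` and `(X', Y')` with `X ≠ X'` are distinguishable whenever `A_X`
and `A_{X'}` are both atoms. -/
theorem atomDFA_distinguishable {α σ : Type*} (D : DFA α σ)
    (hreach : ∀ q : σ, ∃ w : List α, D.evalFrom D.start w = q)
    (hdist : ∀ p q : σ,
      (∀ w : List α, D.evalFrom p w ∈ D.accept ↔ D.evalFrom q w ∈ D.accept) → p = q)
    (hw : ∀ Z : Set σ, (atomicInterD D Z).Nonempty →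
      ∃ w : List α,
        (atomDFA D Z).evalFrom (atomDFA D Z).start w ∈ (atomDFA D Z).accept)
    (S : Set σ) (X Y X' Y' : Set σ)
    (hXY : Disjoint X Y) (hX'Y' : Disjoint X' Y') (hne : X ≠ X')
    (hX : (atomicInterD D X).Nonempty) (hX' : (atomicInterD D X').Nonempty) :
    ∃ w : List α,
      ¬((atomDFA D S).evalFrom (some (X, Y)) w ∈ (atomDFA D S).accept ↔
        (atomDFA D S).evalFrom (some (X', Y')) w ∈ (atomDFA D S).accept) :=
  atomDFA_distinguishable_general D hw S X Y X' Y' hXY hX'Y' hne hX hX'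
end
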